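/- arXiv:1910.01435 — 7 statements merged into one kernel-verified Lean document; each statement's English description precedes it below -/
import Mathlib

section
/- Let B be an n-dimensional Banach space with unit sphere S, and let A be a closed symmetric subset of S. Then the Krasnoselskii genus γ(A) equals the Lusternik–Schnirelmann subspace category of A/ℤ₂ in S/ℤ₂, where A/ℤ₂ denotes the image of A under the quotient identifying u with -u. -/
open Set Metric Topology unitInterval

noncomputable section
open Classical

variable {B : Type*} [NormedAddCommGroup B] [NormedSpace ℝ B]

/-- There exists a continuous, odd, nonvanishing map `A → ℝ^m \ {0}`. -/
def HasOddMap (A : Set B) (m : ℕ) : Prop :=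
  ∃ h : A → (Fin m → ℝ), Continuous h ∧ (∀ x, h x ≠ 0) ∧
    ∀ (x : A) (hx : -(x : B) ∈ A), h ⟨-(x : B), hx⟩ = -h x

/-- Krasnoselskii genus. -/
def genus (A : Set B) : ℕ∞ :=
  if A = ∅ then 0 else sInf {m : ℕ∞ | ∃ k : ℕ, m = k ∧ HasOddMap A k}

/-- A set is contractible within the ambient space `Φ`. -/
def ContractibleIn {Φ : Type*} [TopologicalSpace Φ] (C : Set Φ) : Prop :=
  ∃ x₀ : Φ, ∃ H : C(↥C × ↥I, Φ),
    (∀ x : C, H (x, 0) = (x : Φ)) ∧ (∀ x : C, H (x, 1) = x₀)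

/-- Lusternik–Schnirelmann subspace category (with closed covers). -/
def catLS {Φ : Type*} [TopologicalSpace Φ] (A : Set Φ) : ℕ∞ :=
  sInf {m : ℕ∞ | ∃ k : ℕ, m = k ∧ ∃ C : Fin k → Set Φ,
    (∀ i, IsClosed (C i)) ∧ (∀ i, ContractibleIn (C i)) ∧ A ⊆ ⋃ i, C i}

/-- `X` can be brought to `Y` via a homotopy in `Φ` starting from the inclusion. -/
def BringsTo {Φ : Type*} [TopologicalSpace Φ] (X Y : Set Φ) : Prop :=
  ∃ H : C(↥X × ↥I, Φ),
    (∀ x : X, H (x, 0) = (x : Φ)) ∧ (∀ x : X, H (x, 1) ∈ Y)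

/-- `a` lies in the homotopy significant spectrum of `f`. -/
def HomotopySignificant {Φ : Type*} [TopologicalSpace Φ] (f : Φ → ℝ) (a : ℝ) : Prop :=
  ¬ BringsTo {x | f x ≤ a} {x | f x < a}

/-- `e` is a weak homotopy significant eigenvalue of `f`. -/
def WeakHomotopySignificant {Φ : Type*} [TopologicalSpace Φ] (f : Φ → ℝ) (e : ℝ) : Prop :=
  ∀ t₁ > e, ∀ t₂ < e, ¬ BringsTo {x | f x ≤ t₁} {x | f x ≤ t₂}

/-- The k-th Krasnoselskii eigenvalue of (the restriction to the unit sphere of) `f`. -/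
def kr (f : B → ℝ) (k : ℕ) : EReal :=
  ⨅ A ∈ {A : Set B | A ⊆ sphere (0 : B) 1 ∧ IsClosed A ∧ A = -A ∧ (k : ℕ∞) ≤ genus A},
    ⨆ x ∈ A, (f x : EReal)

/-- The k-th category (min-max) eigenvalue of `f`. -/
def hs {Φ : Type*} [TopologicalSpace Φ] (f : Φ → ℝ) (k : ℕ) : EReal :=
  ⨅ A ∈ {A : Set Φ | IsClosed A ∧ (k : ℕ∞) ≤ catLS A}, ⨆ x ∈ A, (f x : EReal)

/-- The antipodal setoid on the unit sphere of `B`. -/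
def projSetoid (B : Type*) [NormedAddCommGroup B] [NormedSpace ℝ B] :
    Setoid ↥(sphere (0 : B) 1) where
  r x y := (x : B) = y ∨ (x : B) = -(y : B)
  iseqv := by
    constructor
    · intro x; exact Or.inl rfl
    · rintro x y (h | h)
      · exact Or.inl h.symm
      · exact Or.inr (by rw [h, neg_neg])
    · rintro x y z (h | h) (h' | h')
      · exact Or.inl (h.trans h')
      · exact Or.inr (by rw [h, h'])
      · exact Or.inr (by rw [h, h'])
      · exact Or.inl (by rw [h, h', neg_neg])

/-- The projective space of `B`, as the quotient of the unit sphere by the antipodal map. -/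
def Proj (B : Type*) [NormedAddCommGroup B] [NormedSpace ℝ B] := Quotient (projSetoid B)

instance : TopologicalSpace (Proj B) := instTopologicalSpaceQuotient

/-!
A closed set `Q ⊆ S/ℤ₂` is contractible in `S/ℤ₂` exactly when the double cover `π : S → S/ℤ₂`
has a continuous section `s` over `Q`: one direction is homotopy lifting, the other a normalised
straight-line contraction. Such a section gives the odd function
`x ↦ ‖x + s (π x)‖ - ‖x - s (π x)‖`, equal to `±2` on `π⁻¹ Q`; Tietze extension followed by
odd symmetrisation turns a cover of `A/ℤ₂` by `k` such sets into an odd map `A → ℝᵏ \ {0}`.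
Conversely, for an odd `g : A → ℝᵏ \ {0}` the closed sets `{g i = ‖g‖∞}` contain no antipodal
pair, so `π` maps them homeomorphically onto closed sets with a section, and up to sign they
cover `A`.
-/

universe u v

theorem exists_odd_extension {X : Type u} {Y : Type v} [TopologicalSpace X] [NormalSpace X]
    [InvolutiveNeg X] [ContinuousNeg X] [TopologicalSpace Y] [AddCommGroup Y] [Module ℝ Y]
    [IsTopologicalAddGroup Y] [ContinuousConstSMul ℝ Y] [TietzeExtension.{u, v} Y]
    {K : Set X} (hK : IsClosed K) (hKneg : ∀ x ∈ K, -x ∈ K) (φ : C(K, Y))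
    (hφ : ∀ x : K, φ ⟨-x, hKneg x x.2⟩ = -φ x) :
    ∃ g : C(X, Y), (∀ x, g (-x) = -g x) ∧ ∀ x : K, g x = φ x := by
  obtain ⟨g, hg⟩ := φ.exists_restrict_eq hK
  have hgK : ∀ x : K, g x = φ x := fun x => congr($hg x)
  refine ⟨⟨fun x => (2⁻¹ : ℝ) • (g x - g (-x)), by fun_prop⟩, fun x => ?_, fun x => ?_⟩
  · simp only [ContinuousMap.coe_mk, neg_neg]
    module
  · simp only [ContinuousMap.coe_mk]
    rw [hgK x, show g (-x) = φ ⟨-x, hKneg x x.2⟩ from hgK ⟨-x, _⟩, hφ]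
    module

theorem catLS_empty {Φ : Type*} [TopologicalSpace Φ] : catLS (∅ : Set Φ) = 0 :=
  nonpos_iff_eq_zero.1 <|
    sInf_le ⟨0, Nat.cast_zero.symm, finZeroElim, finZeroElim, finZeroElim, empty_subset _⟩

theorem hasOddMap_iff_exists_odd_on_sphere {E : Type*} [NormedAddCommGroup E] {A : Set E}
    (hAS : A ⊆ sphere 0 1) (hA : IsClosed A) (hneg : ∀ x ∈ A, -x ∈ A) {k : ℕ} :
    HasOddMap A k ↔ ∃ g : C(sphere (0 : E) 1, Fin k → ℝ), (∀ x, g (-x) = -g x) ∧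
      ∀ x : sphere (0 : E) 1, (x : E) ∈ A → g x ≠ 0 := by
  constructor
  · rintro ⟨h, hc, hne, hodd⟩
    let K : Set (sphere (0 : E) 1) := (↑) ⁻¹' A
    let φ : C(K, Fin k → ℝ) := ⟨fun x => h ⟨x, x.2⟩, hc.comp (by fun_prop)⟩
    obtain ⟨g, hg_odd, hgφ⟩ := exists_odd_extension (hA.preimage continuous_subtype_val)
      (fun x hx => hneg _ hx) φ (fun x => hodd ⟨x, x.2⟩ _)
    exact ⟨g, hg_odd, fun x hx => hgφ ⟨x, hx⟩ ▸ hne _⟩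
  · rintro ⟨g, hg_odd, hg⟩
    exact ⟨fun a => g ⟨a, hAS a.2⟩, by fun_prop, fun a => hg _ a.2,
      fun a _ => hg_odd ⟨a, hAS a.2⟩⟩

theorem unitSphere_ne_neg_self (x : sphere (0 : B) 1) : x ≠ -x := fun h =>
  ne_zero_of_mem_unit_sphere x <| by
    have h' : (x : B) = -(x : B) := congrArg Subtype.val h
    linear_combination (norm := module) (2⁻¹ : ℝ) • h'

theorem convexComb_ne_zero_of_ne_neg {x y : sphere (0 : B) 1} (h : x ≠ -y) (t : I) :
    (1 - (t : ℝ)) • (x : B) + (t : ℝ) • (y : B) ≠ 0 := by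
  intro h0
  have hxy : (1 - (t : ℝ)) • (x : B) = -((t : ℝ) • (y : B)) := eq_neg_of_add_eq_zero_left h0
  have ht : (t : ℝ) = 1 / 2 := by
    have := congrArg norm hxy
    rw [norm_neg, norm_smul, norm_smul, mem_sphere_zero_iff_norm.1 x.2,
      mem_sphere_zero_iff_norm.1 y.2, Real.norm_of_nonneg (sub_nonneg.2 t.2.2),
      Real.norm_of_nonneg t.2.1] at this
    linarith
  rw [ht] at hxy
  exact h (Subtype.ext (by rw [coe_neg_sphere]; linear_combination (norm := module) (2 : ℝ) • hxy))

theorem unitSphere_real_eq_one_or_eq_neg_one (g : sphere (0 : ℝ) 1) : g = 1 ∨ g = -1 := by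
  rcases abs_eq zero_le_one |>.1 (mem_sphere_zero_iff_norm.1 g.2) with h | h
  exacts [Or.inl (Subtype.ext h), Or.inr (Subtype.ext h)]

theorem neg_one_smul_unitSphere (x : sphere (0 : B) 1) : (-1 : sphere (0 : ℝ) 1) • x = -x :=
  Subtype.ext (neg_one_smul ℝ (x : B))

namespace Proj

def mk : sphere (0 : B) 1 → Proj B := Quotient.mk _

theorem mk_eq_mk_iff {x y : sphere (0 : B) 1} : mk x = mk y ↔ x = y ∨ x = -y :=
  Quotient.eq (r := projSetoid B) |>.trans <| by simp only [Subtype.ext_iff]; rfl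

@[simp]
theorem mk_neg (x : sphere (0 : B) 1) : mk (-x) = mk x :=
  mk_eq_mk_iff.2 (Or.inr rfl)

theorem mk_surjective : Function.Surjective (mk : sphere (0 : B) 1 → Proj B) :=
  Quotient.mk_surjective

theorem isQuotientMap_mk : IsQuotientMap (mk : sphere (0 : B) 1 → Proj B) :=
  isQuotientMap_quotient_mk'

theorem continuous_mk : Continuous (mk : sphere (0 : B) 1 → Proj B) :=
  isQuotientMap_mk.continuous

theorem isClosedMap_mk : IsClosedMap (mk : sphere (0 : B) 1 → Proj B) := by
  intro F hF
  have : mk ⁻¹' (mk '' F) = F ∪ Neg.neg ⁻¹' F := by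
    ext x
    simp only [mem_preimage, mem_image, mem_union, mk_eq_mk_iff]
    constructor
    · rintro ⟨y, hy, rfl | rfl⟩
      exacts [Or.inl hy, Or.inr hy]
    · rintro (hx | hx)
      exacts [⟨x, hx, Or.inl rfl⟩, ⟨-x, hx, Or.inr rfl⟩]
  rw [← isQuotientMap_mk.isClosed_preimage, this]
  exact hF.union (hF.preimage continuous_neg)

/-- `ℤ₂` acts here as the unit sphere `{1, -1}` of `ℝ`, by scalar multiplication. -/
theorem isQuotientCoveringMap_mk :
    IsQuotientCoveringMap (mk : sphere (0 : B) 1 → Proj B) (sphere (0 : ℝ) 1) where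
  __ := isQuotientMap_mk
  apply_eq_iff_mem_orbit {x y} := by
    rw [mk_eq_mk_iff, MulAction.mem_orbit_iff]
    constructor
    · rintro (rfl | rfl)
      exacts [⟨1, one_smul _ _⟩, ⟨-1, neg_one_smul_unitSphere y⟩]
    · rintro ⟨g, rfl⟩
      rcases unitSphere_real_eq_one_or_eq_neg_one g with rfl | rfl
      exacts [Or.inl (one_smul _ _), Or.inr (neg_one_smul_unitSphere y)]
  disjoint x := by
    refine ⟨ball x 1, ball_mem_nhds x one_pos, fun g ⟨_, ⟨y, hy, rfl⟩, hgy⟩ => ?_⟩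
    rcases unitSphere_real_eq_one_or_eq_neg_one g with rfl | rfl
    · rfl
    simp only [neg_one_smul_unitSphere] at hgy
    rw [mem_ball, Subtype.dist_eq, dist_eq_norm] at hgy hy
    have h2 : ‖(y : B) - x - (-(y : B) - x)‖ = 2 := by
      rw [show (y : B) - x - (-(y : B) - x) = (2 : ℝ) • (y : B) by module, norm_smul,
        mem_sphere_zero_iff_norm.1 y.2]
      norm_num
    have := norm_sub_le ((y : B) - x) (-(y : B) - x)
    simp only [coe_neg_sphere] at hgy
    linarith

theorem isCoveringMap_mk : IsCoveringMap (mk : sphere (0 : B) 1 → Proj B) :=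
  isQuotientCoveringMap_mk.isCoveringMap

theorem exists_section_of_contractibleIn {Q : Set (Proj B)} (hQ : ContractibleIn Q) :
    ∃ s : Q → sphere (0 : B) 1, Continuous s ∧ ∀ q, mk (s q) = q := by
  obtain ⟨p₀, H, hH₀, hH₁⟩ := hQ
  obtain ⟨x₀, rfl⟩ := mk_surjective p₀
  -- lift the reversed contraction, which starts at the constant map `p₀`
  let H' : C(I × Q, Proj B) := H.comp (ContinuousMap.prodSwap.comp
    (ContinuousMap.prodMap ⟨σ, continuous_symm⟩ (ContinuousMap.id Q)))
  have H'₀ : ∀ q, H' (0, q) = mk (ContinuousMap.const Q x₀ q) := fun q => by simp [H', hH₁]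
  refine ⟨fun q => isCoveringMap_mk.liftHomotopy H' _ H'₀ (1, q), by fun_prop, fun q => ?_⟩
  simpa [H', hH₀] using congrFun (isCoveringMap_mk.liftHomotopy_lifts H' _ H'₀) (1, q)

theorem contractibleIn_of_section [Nontrivial B] {Q : Set (Proj B)} {s : Q → sphere (0 : B) 1}
    (hs : Continuous s) (hsec : ∀ q, mk (s q) = q) : ContractibleIn Q := by
  obtain ⟨w, hw⟩ : ∃ w : sphere (0 : B) 1, ∀ q, s q ≠ -w := by
    rcases isEmpty_or_nonempty Q with hQ | ⟨⟨q₀⟩⟩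
    · obtain ⟨w, hw⟩ := (NormedSpace.sphere_nonempty (x := (0 : B))).2 zero_le_one
      exact ⟨⟨w, hw⟩, isEmptyElim⟩
    · refine ⟨s q₀, fun q h => ?_⟩
      obtain rfl : q = q₀ := Subtype.ext (by rw [← hsec q, ← hsec q₀, h, mk_neg])
      exact unitSphere_ne_neg_self _ h
  let v : Q × I → B := fun z => (1 - (z.2 : ℝ)) • (s z.1 : B) + (z.2 : ℝ) • (w : B)
  have hv : ∀ z, ‖v z‖ ≠ 0 := fun z =>
    norm_ne_zero_iff.2 (convexComb_ne_zero_of_ne_neg (hw z.1) z.2)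
  have hvc : Continuous v := by fun_prop
  let G : Q × I → sphere (0 : B) 1 := fun z => ⟨‖v z‖⁻¹ • v z, by simp [norm_smul, hv z]⟩
  have hG : Continuous G := ((hvc.norm.inv₀ hv).smul hvc).subtype_mk _
  refine ⟨mk w, ⟨mk ∘ G, continuous_mk.comp hG⟩, fun q => ?_, fun q => ?_⟩
  · simpa [G, v, mem_sphere_zero_iff_norm.1 (s q).2] using hsec q
  · simp [G, v, mem_sphere_zero_iff_norm.1 w.2]

theorem exists_section_of_neg_notMem {D : Set (sphere (0 : B) 1)} (hD : IsClosed D)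
    (hneg : ∀ x ∈ D, -x ∉ D) :
    ∃ s : mk '' D → sphere (0 : B) 1, Continuous s ∧ ∀ q, mk (s q) = q := by
  choose s hsD hs using fun q : mk '' D => q.2
  have hs_eq : ∀ (q : mk '' D) x, x ∈ D → mk x = q → s q = x := fun q x hx hxq =>
    (mk_eq_mk_iff.1 ((hs q).trans hxq.symm)).resolve_right fun h => hneg x hx (h ▸ hsD q)
  refine ⟨s, continuous_iff_isClosed.2 fun F hF => ?_, hs⟩
  have : s ⁻¹' F = (↑) ⁻¹' (mk '' (D ∩ F)) := by
    ext q
    constructor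
    · exact fun hq => ⟨s q, ⟨hsD q, hq⟩, hs q⟩
    · rintro ⟨x, ⟨hxD, hxF⟩, hxq⟩
      rwa [mem_preimage, hs_eq q x hxD hxq]
  rw [this]
  exact (isClosedMap_mk _ (hD.inter hF)).preimage continuous_subtype_val

theorem norm_add_sub_norm_sub_ne_zero {x y : sphere (0 : B) 1} (h : mk x = mk y) :
    ‖(x : B) + y‖ - ‖(x : B) - y‖ ≠ 0 := by
  have hy := mem_sphere_zero_iff_norm.1 y.2
  rcases mk_eq_mk_iff.1 h with rfl | rfl
  · simp [← two_smul ℝ, norm_smul, hy]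
  · rw [coe_neg_sphere, show -(y : B) - y = -((2 : ℝ) • (y : B)) by module]
    simp [norm_smul, hy]

theorem exists_odd_ne_zero_of_section {Q : Set (Proj B)} (hQ : IsClosed Q)
    {s : Q → sphere (0 : B) 1} (hs : Continuous s) (hsec : ∀ q, mk (s q) = q) :
    ∃ g : C(sphere (0 : B) 1, ℝ), (∀ x, g (-x) = -g x) ∧ ∀ x, mk x ∈ Q → g x ≠ 0 := by
  have hKneg : ∀ x ∈ mk ⁻¹' Q, -x ∈ mk ⁻¹' Q := fun x hx => by simpa using hx
  let r : mk ⁻¹' Q → sphere (0 : B) 1 := fun x => s ⟨mk x, x.2⟩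
  have hr : Continuous r := hs.comp ((continuous_mk.comp continuous_subtype_val).subtype_mk _)
  have hr_neg : ∀ x : mk ⁻¹' Q, r ⟨-x, hKneg x x.2⟩ = r x := fun x =>
    congrArg s (Subtype.ext (mk_neg _))
  -- `φ x = 2` if `x = r x` and `φ x = -2` if `x = -r x`
  let φ : C(mk ⁻¹' Q, ℝ) := ⟨fun x => ‖(x : B) + r x‖ - ‖(x : B) - r x‖, by fun_prop⟩
  have hφ : ∀ x : mk ⁻¹' Q, φ ⟨-x, hKneg x x.2⟩ = -φ x := fun x => by
    simp only [φ, ContinuousMap.coe_mk, hr_neg, coe_neg_sphere]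
    rw [neg_add_eq_sub, norm_sub_rev, ← neg_add', norm_neg]
    ring
  obtain ⟨g, hg_odd, hgφ⟩ := exists_odd_extension (hQ.preimage continuous_mk) hKneg φ hφ
  refine ⟨g, hg_odd, fun x hx => ?_⟩
  rw [hgφ ⟨x, hx⟩]
  exact norm_add_sub_norm_sub_ne_zero (hsec ⟨mk x, hx⟩).symm

theorem exists_odd_of_cover {k : ℕ} {C : Fin k → Set (Proj B)} (hC : ∀ i, IsClosed (C i))
    (hCc : ∀ i, ContractibleIn (C i)) :
    ∃ g : C(sphere (0 : B) 1, Fin k → ℝ), (∀ x, g (-x) = -g x) ∧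
      ∀ x, mk x ∈ ⋃ i, C i → g x ≠ 0 := by
  choose s hs hsec using fun i => exists_section_of_contractibleIn (hCc i)
  choose g hg_odd hg using fun i => exists_odd_ne_zero_of_section (hC i) (hs i) (hsec i)
  refine ⟨ContinuousMap.pi g, fun x => funext fun i => hg_odd i x, fun x hx h0 => ?_⟩
  obtain ⟨i, hi⟩ := mem_iUnion.1 hx
  exact hg i x hi (congrFun h0 i)

theorem exists_cover_of_odd [Nontrivial B] {k : ℕ} {K : Set (sphere (0 : B) 1)}
    (hK : IsClosed K) (hKneg : ∀ x ∈ K, -x ∈ K) (g : C(sphere (0 : B) 1, Fin k → ℝ))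
    (hg_odd : ∀ x, g (-x) = -g x) (hg : ∀ x ∈ K, g x ≠ 0) :
    ∃ C : Fin k → Set (Proj B), (∀ i, IsClosed (C i)) ∧ (∀ i, ContractibleIn (C i)) ∧
      mk '' K ⊆ ⋃ i, C i := by
  let D i := K ∩ {x | g x i = ‖g x‖}
  have hD : ∀ i, IsClosed (D i) := fun i =>
    hK.inter (isClosed_eq (by fun_prop) (by fun_prop))
  have hD_neg : ∀ i, ∀ x ∈ D i, -x ∉ D i := by
    rintro i x ⟨hxK, hx : g x i = ‖g x‖⟩ ⟨-, hnx : g (-x) i = ‖g (-x)‖⟩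
    have hpos : 0 < ‖g x‖ := norm_pos_iff.2 (hg x hxK)
    simp only [hg_odd, Pi.neg_apply, norm_neg] at hnx
    linarith
  refine ⟨fun i => mk '' D i, fun i => isClosedMap_mk _ (hD i), fun i => ?_, ?_⟩
  · obtain ⟨s, hs, hsec⟩ := exists_section_of_neg_notMem (hD i) (hD_neg i)
    exact contractibleIn_of_section hs hsec
  rintro _ ⟨x, hx, rfl⟩
  have : Nonempty (Fin k) := by
    by_contra h
    rw [not_nonempty_iff] at h
    exact hg x hx (Subsingleton.elim _ _)
  obtain ⟨i, hi : |g x i| = ‖g x‖⟩ := (IsGreatest.pi_norm (g x)).1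
  rcases abs_choice (g x i) with h | h
  · exact mem_iUnion.2 ⟨i, x, ⟨hx, show g x i = ‖g x‖ by linarith⟩, rfl⟩
  · refine mem_iUnion.2 ⟨i, -x, ⟨hKneg x hx, show g (-x) i = ‖g (-x)‖ by
      simp only [hg_odd, Pi.neg_apply, norm_neg]; linarith⟩, mk_neg x⟩

theorem exists_odd_iff_exists_cover [Nontrivial B] {k : ℕ} {K : Set (sphere (0 : B) 1)}
    (hK : IsClosed K) (hKneg : ∀ x ∈ K, -x ∈ K) :
    (∃ g : C(sphere (0 : B) 1, Fin k → ℝ), (∀ x, g (-x) = -g x) ∧ ∀ x ∈ K, g x ≠ 0) ↔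
      ∃ C : Fin k → Set (Proj B), (∀ i, IsClosed (C i)) ∧ (∀ i, ContractibleIn (C i)) ∧
        mk '' K ⊆ ⋃ i, C i := by
  constructor
  · rintro ⟨g, hg_odd, hg⟩
    exact exists_cover_of_odd hK hKneg g hg_odd hg
  · rintro ⟨C, hC, hCc, hKC⟩
    obtain ⟨g, hg_odd, hg⟩ := exists_odd_of_cover hC hCc
    exact ⟨g, hg_odd, fun x hx => hg x (hKC (mem_image_of_mem mk hx))⟩

end Proj

theorem genus_eq_catLS_quotient_general
    (A : Set B) (hAS : A ⊆ sphere (0 : B) 1) (hA : IsClosed A) (hsymm : A = -A) :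
    genus A =
      catLS {p : Proj B | ∃ x : ↥(sphere (0 : B) 1), (x : B) ∈ A ∧
        Quotient.mk (projSetoid B) x = p} := by
  rcases A.eq_empty_or_nonempty with rfl | ⟨a, ha⟩
  · simp [genus, catLS_empty]
  have : Nontrivial B := ⟨a, 0, ne_zero_of_mem_unit_sphere ⟨a, hAS ha⟩⟩
  have hneg : ∀ x ∈ A, -x ∈ A := fun x hx => mem_neg.1 (hsymm ▸ hx)
  rw [genus, if_neg (nonempty_iff_ne_empty.1 ⟨a, ha⟩), catLS]
  congr 1
  ext m
  refine exists_congr fun k => and_congr_right fun _ => ?_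
  rw [hasOddMap_iff_exists_odd_on_sphere hAS hA hneg]
  exact Proj.exists_odd_iff_exists_cover (hA.preimage continuous_subtype_val)
    fun x hx => hneg _ hx

/-- For a closed symmetric subset `A` of the unit sphere of a finite-dimensional Banach
space, the Krasnoselskii genus of `A` equals the Lusternik–Schnirelmann subspace category
of `A/ℤ₂` inside `S/ℤ₂`. -/
theorem genus_eq_catLS_quotient [CompleteSpace B] [FiniteDimensional ℝ B]
    (A : Set B) (hAS : A ⊆ sphere (0 : B) 1) (hA : IsClosed A) (hsymm : A = -A) :
    genus A =
      catLS {p : Proj B | ∃ x : ↥(sphere (0 : B) 1), (x : B) ∈ A ∧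
        Quotient.mk (projSetoid B) x = p} :=
  genus_eq_catLS_quotient_general A hAS hA hsymm
end
end

section
/- Let B be a Banach space with unit sphere S and let f : S → ℝ be even and continuous. Then the k-th Krasnoselskii eigenvalue kr_k := inf over closed symmetric A ⊂ S with γ(A) ≥ k of sup_{x∈A} f(x) satisfies kr_k = inf { t ∈ ℝ : γ(S_{≤t}) ≥ k }, where S_{≤t} = { x ∈ S : f(x) ≤ t }. -/
open Set Metric Topology unitInterval

noncomputable section
open Classical

variable {B : Type*} [NormedAddCommGroup B] [NormedSpace ℝ B]

lemma genus_mono {A A' : Set B} (h : A ⊆ A') : genus A ≤ genus A' := by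
  by_cases hA : A = ∅
  · simp [genus, hA]
  · have hA' : A' ≠ ∅ := fun h' => hA (Set.subset_empty_iff.mp (h' ▸ h))
    rw [genus, genus, if_neg hA, if_neg hA']
    apply sInf_le_sInf
    rintro m ⟨n, rfl, g, hg, hg0, hodd⟩
    refine ⟨n, rfl, fun x => g ⟨x, h x.2⟩, ?_, fun x => hg0 _, ?_⟩
    · exact hg.comp (Continuous.subtype_mk continuous_subtype_val _)
    · intro x hx
      exact hodd ⟨x, h x.2⟩ (h hx)

/-- For an even continuous function on the unit sphere of a Banach space, the k-th
Krasnoselskii eigenvalue equals the infimum of levels `t` at which the genus of the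
sublevel set is at least `k`. -/
theorem kr_eq_sInf_genus_sublevel [CompleteSpace B]
    (f : B → ℝ) (hf : ContinuousOn f (sphere (0 : B) 1))
    (heven : ∀ x ∈ sphere (0 : B) 1, f (-x) = f x) (k : ℕ) :
    kr f k =
      sInf ((fun t : ℝ => (t : EReal)) ''
        {t : ℝ | (k : ℕ∞) ≤ genus {x ∈ sphere (0 : B) 1 | f x ≤ t}}) := by
  apply le_antisymm
  · refine le_sInf ?_
    rintro b ⟨t, ht, rfl⟩
    rw [kr]
    refine (iInf₂_le {x ∈ sphere (0 : B) 1 | f x ≤ t} ?_).trans ?_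
    · refine ⟨fun x hx => hx.1, hf.preimage_isClosed_of_isClosed isClosed_sphere isClosed_Iic, ?_, ht⟩
      ext x
      rw [Set.mem_neg]
      constructor
      · rintro ⟨h1, h2⟩
        have hx : -x ∈ sphere (0 : B) 1 := by
          simpa [mem_sphere_zero_iff_norm] using h1
        exact ⟨hx, by rwa [heven x h1]⟩
      · rintro ⟨h1, h2⟩
        have hx : x ∈ sphere (0 : B) 1 := by
          simpa [mem_sphere_zero_iff_norm] using h1
        exact ⟨hx, by rwa [heven x hx] at h2⟩
    · exact iSup₂_le fun x hx => EReal.coe_le_coe_iff.mpr hx.2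
  · rw [kr]
    refine le_iInf₂ fun A hA => ?_
    obtain ⟨hAs, hAc, hAsym, hAg⟩ := hA
    set s := ⨆ x ∈ A, (f x : EReal) with hsdef
    by_cases hst : s = ⊤
    · exact hst ▸ le_top
    by_contra hlt
    push_neg at hlt
    obtain ⟨z, hz1, hz2⟩ := EReal.exists_between_coe_real hlt
    have hsub : A ⊆ {x ∈ sphere (0 : B) 1 | f x ≤ z} := by
      intro x hx
      refine ⟨hAs hx, ?_⟩
      have : (f x : EReal) ≤ z := le_trans (le_iSup₂ (f := fun x _ => (f x : EReal)) x hx) hz1.le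
      exact_mod_cast this
    have hmem : (z : EReal) ∈ ((fun t : ℝ => (t : EReal)) ''
        {t : ℝ | (k : ℕ∞) ≤ genus {x ∈ sphere (0 : B) 1 | f x ≤ t}}) :=
      ⟨z, hAg.trans (genus_mono hsub), rfl⟩
    exact absurd (sInf_le hmem) (not_le.mpr hz2)


end
end

section
/- Let B be a Banach space, Φ its projective space, and f : Φ → ℝ continuous. Then no value t with hs₁ < t < hs₂ is homotopy significant; i.e., the only homotopy significant eigenvalue of f below hs₂ is hs₁. -/
open Set Metric Topology unitInterval

noncomputable section
open Classical

variable {B : Type*} [NormedAddCommGroup B] [NormedSpace ℝ B]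

/-!
If `t < hs₂`, the closed sublevel set `{f ≤ t}` has category at most one, so it is empty or lies
in a single closed set contractible in `Φ`. If `hs₁ < t`, some point `y` has `f y < t`. Projective
space is path-connected (the segment between two non-antipodal unit vectors misses `0`), so the
contraction of `{f ≤ t}` to a point can be continued along a path to `y`, which deforms
`{f ≤ t}` into `{f < t}`.
-/

theorem zero_notMem_segment_of_norm_eq {x y : B} (hn : ‖x‖ = ‖y‖) (hxy : x ≠ -y) :
    (0 : B) ∉ segment ℝ x y := by
  rintro ⟨a, b, ha, hb, hab, hzero⟩
  have hax : a • x = -(b • y) := eq_neg_of_add_eq_zero_left hzero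
  have hnorms : a * ‖x‖ = b * ‖x‖ := by
    simpa [norm_smul, abs_of_nonneg ha, abs_of_nonneg hb, ← hn] using congrArg norm hax
  rcases eq_or_ne ‖x‖ 0 with hx0 | hx0
  · rw [hx0, eq_comm, norm_eq_zero] at hn
    rw [norm_eq_zero] at hx0
    exact hxy (by simp [hx0, hn])
  · obtain rfl : a = b := mul_right_cancel₀ hx0 hnorms
    rw [← smul_neg] at hax
    exact hxy (smul_right_injective B (by linarith : a ≠ 0) hax)

theorem joinedIn_sphere_of_ne_neg {x y : B} (hx : x ∈ sphere (0 : B) 1)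
    (hy : y ∈ sphere (0 : B) 1) (hxy : x ≠ -y) : JoinedIn (sphere (0 : B) 1) x y := by
  rw [mem_sphere_zero_iff_norm] at hx hy
  have hseg : JoinedIn {0}ᶜ x y := JoinedIn.of_segment_subset fun v hv hv0 =>
    zero_notMem_segment_of_norm_eq (hx.trans hy.symm) hxy (by rwa [← mem_singleton_iff.1 hv0])
  have hproj := hseg.map_continuousOn (f := fun v : B => ‖v‖⁻¹ • v)
    (continuousOn_id.norm.inv₀ (fun v hv => norm_ne_zero_iff.2 hv) |>.smul continuousOn_id)
  simp only [hx, hy, inv_one, one_smul] at hproj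
  refine hproj.mono ?_
  rintro _ ⟨v, hv, rfl⟩
  rw [mem_sphere_zero_iff_norm, norm_smul, norm_inv, norm_norm,
    inv_mul_cancel₀ (norm_ne_zero_iff.2 hv)]

theorem Proj.joined (a b : Proj B) : Joined a b := by
  obtain ⟨x, rfl⟩ := Quotient.exists_rep a
  obtain ⟨y, rfl⟩ := Quotient.exists_rep b
  by_cases hxy : (x : B) = -(y : B)
  · rw [Quotient.sound (Or.inr hxy : projSetoid B x y)]
    exact Joined.refl _
  · exact (joinedIn_sphere_of_ne_neg x.2 y.2 hxy).joined_subtype.map continuous_quotient_mk'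

instance [Nonempty (Proj B)] : PathConnectedSpace (Proj B) :=
  ⟨inferInstance, Proj.joined⟩

section Category

variable {Φ : Type*} [TopologicalSpace Φ]

theorem BringsTo.mono_left {X X' Y : Set Φ} (h : BringsTo X Y) (hX : X' ⊆ X) :
    BringsTo X' Y := by
  obtain ⟨H, H0, H1⟩ := h
  exact ⟨H.comp ((ContinuousMap.inclusion hX).prodMap (ContinuousMap.id I)),
    fun x => H0 (inclusion hX x), fun x => H1 (inclusion hX x)⟩

theorem bringsTo_empty (Y : Set Φ) : BringsTo ∅ Y :=
  ⟨⟨fun p => p.1.2.elim, continuous_of_discreteTopology⟩, fun x => x.2.elim,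
    fun x => x.2.elim⟩

theorem bringsTo_of_homotopic {X Y : Set Φ} {g : C(X, Φ)}
    (h : ((ContinuousMap.id Φ).restrict X).Homotopic g) (hg : ∀ x, g x ∈ Y) :
    BringsTo X Y := by
  obtain ⟨H⟩ := h
  exact ⟨H.toContinuousMap.comp ContinuousMap.prodSwap, H.apply_zero, fun x => H.apply_one x ▸ hg x⟩

theorem ContractibleIn.bringsTo [PathConnectedSpace Φ] {C Y : Set Φ} (hC : ContractibleIn C)
    {y : Φ} (hy : y ∈ Y) : BringsTo C Y := by
  obtain ⟨x₀, H, H0, H1⟩ := hC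
  have hconst : ((ContinuousMap.id Φ).restrict C).Homotopic (ContinuousMap.const C x₀) :=
    ⟨{ toContinuousMap := H.comp ContinuousMap.prodSwap
       map_zero_left := H0
       map_one_left := H1 }⟩
  exact bringsTo_of_homotopic
    (hconst.trans ⟨(PathConnectedSpace.somePath x₀ y).toHomotopyConst⟩) fun _ => hy

theorem exists_cover_of_catLS_lt {A : Set Φ} {n : ℕ} (h : catLS A < n) :
    ∃ k < n, ∃ C : Fin k → Set Φ,
      (∀ i, IsClosed (C i)) ∧ (∀ i, ContractibleIn (C i)) ∧ A ⊆ ⋃ i, C i := by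
  obtain ⟨_, ⟨k, rfl, hcover⟩, hk⟩ := sInf_lt_iff.1 h
  exact ⟨k, by exact_mod_cast hk, hcover⟩

theorem Set.Nonempty.of_one_le_catLS {A : Set Φ} (h : 1 ≤ catLS A) : A.Nonempty := by
  rw [nonempty_iff_ne_empty]
  rintro rfl
  have hzero : catLS (∅ : Set Φ) ≤ 0 :=
    sInf_le ⟨0, rfl, Fin.elim0, fun i => i.elim0, fun i => i.elim0, empty_subset _⟩
  exact absurd (h.trans hzero) (by simp)

theorem bringsTo_of_catLS_lt_two [PathConnectedSpace Φ] {A Y : Set Φ} (hA : catLS A < 2)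
    (hY : Y.Nonempty) : BringsTo A Y := by
  obtain ⟨y, hy⟩ := hY
  obtain ⟨k, hk, C, -, hC, hAC⟩ := exists_cover_of_catLS_lt hA
  interval_cases k
  · simp only [iUnion_of_empty, subset_empty_iff] at hAC
    exact hAC ▸ bringsTo_empty Y
  · exact ((hC 0).bringsTo hy).mono_left (hAC.trans (iSup_unique C).le)

theorem exists_lt_of_hs_lt {f : Φ → ℝ} {k : ℕ} {t : ℝ} (hk : k ≠ 0) (h : hs f k < t) :
    ∃ y, f y < t := by
  simp only [hs, iInf_lt_iff] at h
  obtain ⟨A, ⟨-, hA⟩, hsup⟩ := h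
  obtain ⟨y, hy⟩ := Set.Nonempty.of_one_le_catLS ((by exact_mod_cast Nat.one_le_iff_ne_zero.2 hk :
    (1 : ℕ∞) ≤ k).trans hA)
  exact ⟨y, EReal.coe_lt_coe_iff.1 ((le_biSup (fun x => (f x : EReal)) hy).trans_lt hsup)⟩

theorem catLS_sublevel_lt_of_lt_hs {f : Φ → ℝ} (hf : Continuous f) {k : ℕ} {t : ℝ}
    (h : (t : EReal) < hs f k) : catLS {x | f x ≤ t} < k := by
  by_contra! hk
  have hle : hs f k ≤ ⨆ x ∈ {x | f x ≤ t}, (f x : EReal) :=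
    iInf₂_le _ ⟨isClosed_le hf continuous_const, hk⟩
  exact (hle.trans (iSup₂_le fun x hx => EReal.coe_le_coe_iff.2 hx)).not_gt h

theorem not_homotopySignificant_of_hs_one_lt_of_lt_hs_two [PathConnectedSpace Φ] {f : Φ → ℝ}
    (hf : Continuous f) {t : ℝ} (h1 : hs f 1 < t) (h2 : (t : EReal) < hs f 2) :
    ¬ HomotopySignificant f t :=
  not_not.2 <| bringsTo_of_catLS_lt_two (by exact_mod_cast catLS_sublevel_lt_of_lt_hs hf h2)
    (exists_lt_of_hs_lt one_ne_zero h1)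

end Category

theorem not_homotopySignificant_between_hs1_hs2_general
    (f : Proj B → ℝ) (hf : Continuous f) (t : ℝ)
    (h1 : hs f 1 < (t : EReal)) (h2 : (t : EReal) < hs f 2) :
    ¬ HomotopySignificant f t := by
  obtain ⟨y, -⟩ := exists_lt_of_hs_lt one_ne_zero h1
  have : Nonempty (Proj B) := ⟨y⟩
  exact not_homotopySignificant_of_hs_one_lt_of_lt_hs_two hf h1 h2

/-- No value strictly between `hs₁` and `hs₂` is homotopy significant: the only homotopy
significant eigenvalue below `hs₂` is `hs₁`. -/
theorem not_homotopySignificant_between_hs1_hs2 [CompleteSpace B]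
    (f : Proj B → ℝ) (hf : Continuous f) (t : ℝ)
    (h1 : hs f 1 < (t : EReal)) (h2 : (t : EReal) < hs f 2) :
    ¬ HomotopySignificant f t :=
  not_homotopySignificant_between_hs1_hs2_general f hf t h1 h2

end
end

section
/- Let f : ℝP¹ → ℝ be continuous. Then the homotopy significant spectrum of f equals { hs₁, hs₂ } = { min f, max f }. -/
open Set Metric Topology unitInterval

noncomputable section
open Classical

variable {B : Type*} [NormedAddCommGroup B] [NormedSpace ℝ B]

/-!
Squaring unit complex numbers identifies `ℝP¹` with the circle. A subset of the circle missing a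
point `p` carries a continuous argument, so it can be deformed within the circle onto any point
other than `p`. The whole circle cannot be deformed off a point: lift such a deformation of the
standard loop through `Circle.exp : ℝ → Circle`; every lifted loop climbs by exactly `2π`, so the
final loop still meets every point. Thus a sublevel set strictly between `min f` and `max f` can be
pushed below its level while those at `min f` and `max f` cannot, and the only closed set of
category `≥ 2` is the whole space.
-/

section SublevelHomotopy

variable {Φ : Type*} [TopologicalSpace Φ]

theorem bringsTo_of_subset {X Y : Set Φ} (h : X ⊆ Y) : BringsTo X Y :=
  bringsTo_of_homotopic (.refl _) fun x => h x.2

theorem BringsTo.mono {X Y Y' : Set Φ} (h : BringsTo X Y) (hY : Y ⊆ Y') : BringsTo X Y' :=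
  let ⟨H, h₀, h₁⟩ := h
  ⟨H, h₀, fun x => hY (h₁ x)⟩

theorem contractibleIn_iff_exists_bringsTo {C : Set Φ} :
    ContractibleIn C ↔ ∃ x₀, BringsTo C {x₀} := by
  simp only [ContractibleIn, BringsTo, mem_singleton_iff]

theorem bringsTo_of_lift {E : Type*} [TopologicalSpace E] [ContractibleSpace E] (π : C(E, Φ))
    {X Y : Set Φ} (L : C(X, E)) (hπL : ∀ x, π (L x) = x) {e : E} (he : π e ∈ Y) :
    BringsTo X Y := by
  rcases isEmpty_or_nonempty X with hX | hX
  · exact bringsTo_of_subset fun x hx => hX.elim ⟨x, hx⟩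
  have hincl : (ContinuousMap.id Φ).restrict X = π.comp L := by ext x; exact (hπL x).symm
  obtain ⟨e', he'⟩ := (id_nullhomotopic E).comp_left L
  rw [ContinuousMap.id_comp] at he'
  have hL : L.Homotopic (.const X e) :=
    he'.trans (ContinuousMap.homotopic_const_iff.2 (PathConnectedSpace.joined e' e))
  refine bringsTo_of_homotopic (g := π.comp (.const X e)) ?_ fun _ => he
  rw [hincl]
  exact (ContinuousMap.Homotopic.refl π).comp hL

theorem one_le_catLS_iff {A : Set Φ} : 1 ≤ catLS A ↔ A.Nonempty := by
  constructor
  · intro h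
    by_contra hA
    have : catLS A ≤ 0 := sInf_le ⟨0, rfl, Fin.elim0, fun i => i.elim0, fun i => i.elim0,
      by simpa [not_nonempty_iff_eq_empty] using hA⟩
    exact absurd (h.trans this) (by norm_num)
  · rintro ⟨x, hx⟩
    refine le_sInf ?_
    rintro _ ⟨k, rfl, C, -, -, hcover⟩
    obtain ⟨i, -⟩ := mem_iUnion.1 (hcover hx)
    exact_mod_cast i.pos

theorem catLS_le_one {C : Set Φ} (hC : IsClosed C) (h : ContractibleIn C) : catLS C ≤ 1 :=
  sInf_le ⟨1, rfl, fun _ => C, fun _ => hC, fun _ => h, subset_iUnion (fun _ : Fin 1 => C) 0⟩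

theorem two_le_catLS_univ_of_not_contractibleIn [Nonempty Φ]
    (h : ¬ ContractibleIn (univ : Set Φ)) : 2 ≤ catLS (univ : Set Φ) := by
  refine le_sInf ?_
  rintro _ ⟨k, rfl, C, -, hC, hcover⟩
  obtain ⟨x⟩ := ‹Nonempty Φ›
  by_contra! hk
  have hk : k < 2 := by exact_mod_cast hk
  interval_cases k
  · exact (mem_iUnion.1 (hcover (mem_univ x))).choose.elim0
  · refine h (eq_univ_of_forall (fun y => ?_) ▸ hC 0)
    obtain ⟨i, hi⟩ := mem_iUnion.1 (hcover (mem_univ y))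
    rwa [Subsingleton.elim i 0] at hi

theorem hs_one_eq_iInf [T1Space Φ] (f : Φ → ℝ) : hs f 1 = ⨅ x, (f x : EReal) := by
  refine le_antisymm (le_iInf fun x => ?_) (le_iInf₂ fun A hA => ?_)
  · calc hs f 1 ≤ ⨆ y ∈ ({x} : Set Φ), (f y : EReal) :=
          iInf₂_le _ ⟨isClosed_singleton, one_le_catLS_iff.2 (singleton_nonempty x)⟩
      _ = f x := iSup_singleton
  · obtain ⟨x, hx⟩ := one_le_catLS_iff.1 hA.2
    exact (iInf_le _ x).trans (le_biSup (fun y => (f y : EReal)) hx)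

end SublevelHomotopy

namespace Circle

open Real unitInterval

theorem exists_lift_compl_singleton (p : Circle) :
    ∃ L : C(({p}ᶜ : Set Circle), ℝ), ∀ z, exp (L z) = z := by
  have hslit : ∀ z : ({p}ᶜ : Set Circle), ((z * (-p)⁻¹ : Circle) : ℂ) ∈ Complex.slitPlane := by
    intro z
    rw [Complex.mem_slitPlane_iff_arg]
    refine ⟨fun h => z.2 ?_, coe_ne_zero _⟩
    have : (z : Circle) * (-p)⁻¹ = -1 := by
      rw [← arg_eq_arg, h, coe_neg, coe_one, Complex.arg_neg_one]
    rwa [mul_inv_eq_iff_eq_mul, neg_one_mul, neg_neg] at this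
  refine ⟨⟨fun z => Complex.arg (z * (-p)⁻¹ : Circle) + Complex.arg (-p : Circle), ?_⟩, fun z => ?_⟩
  · refine Continuous.add ?_ continuous_const
    exact continuous_iff_continuousAt.2 fun z =>
      (Complex.continuousAt_arg (hslit z)).comp
        (f := fun w : ({p}ᶜ : Set Circle) => ((w * (-p)⁻¹ : Circle) : ℂ)) (by fun_prop)
  · change exp (Complex.arg (z * (-p)⁻¹ : Circle) + Complex.arg (-p : Circle)) = z
    rw [exp_add, exp_arg, exp_arg, inv_mul_cancel_right]

theorem surjective_of_homotopy_from_exp (F : C(I × I, Circle))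
    (h₀ : ∀ s : I, F (0, s) = exp (2 * π * s)) (hloop : ∀ t, F (t, 0) = F (t, 1)) :
    Function.Surjective fun s => F (1, s) := by
  set G := isCoveringMap_exp.liftHomotopy F ⟨fun s : I => 2 * π * s, by fun_prop⟩ h₀
  have hG : ∀ ts, exp (G ts) = F ts := congr_fun (isCoveringMap_exp.liftHomotopy_lifts _ _ h₀)
  have hG₀ : ∀ s, G (0, s) = 2 * π * s := isCoveringMap_exp.liftHomotopy_zero _ _ h₀
  -- both sides lift the path `F (·, 0) = F (·, 1)` and agree at `t = 0`
  have hrow : ∀ t, G (t, 1) = G (t, 0) + 2 * π := congr_fun <|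
    isCoveringMap_exp.eq_of_comp_eq (g₁ := fun t => G (t, 1)) (g₂ := fun t => G (t, 0) + 2 * π)
      (by fun_prop) (by fun_prop) (funext fun t => by simp [hG, hloop]) 0 (by simp [hG₀])
  intro z
  obtain ⟨θ, rfl⟩ := exp_surjective z
  have hθ : toIcoMod two_pi_pos (G (1, 0)) θ ∈ Icc (G (1, 0)) (G (1, 1)) := by
    rw [hrow]
    exact Ico_subset_Icc_self (toIcoMod_mem_Ico _ _ _)
  obtain ⟨s, hs⟩ := intermediate_value_univ 0 1 (by fun_prop : Continuous fun s => G (1, s)) hθ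
  refine ⟨s, ?_⟩
  simp only [← hG, hs, toIcoMod, periodic_exp.sub_zsmul_eq]

end Circle

instance [FiniteDimensional ℝ B] : CompactSpace (Proj B) := Quotient.compactSpace

namespace Proj

open Real unitInterval

local notation "ℝP¹" => Proj (EuclideanSpace ℝ (Fin 2))
local notation "S¹" => sphere (0 : EuclideanSpace ℝ (Fin 2)) 1

def sphereToCircle (v : S¹) : Circle :=
  ⟨Complex.orthonormalBasisOneI.repr.symm v, show _ ∈ sphere (0 : ℂ) 1 by
    rw [mem_sphere_zero_iff_norm, LinearIsometryEquiv.norm_map, norm_eq_of_mem_sphere]⟩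

theorem coe_sphereToCircle (v : S¹) :
    (sphereToCircle v : ℂ) = Complex.orthonormalBasisOneI.repr.symm v := rfl

theorem continuous_sphereToCircle : Continuous sphereToCircle :=
  Continuous.subtype_mk (by fun_prop) _

theorem sphereToCircle_injective : Function.Injective sphereToCircle := fun _ _ h =>
  Subtype.ext <| Complex.orthonormalBasisOneI.repr.symm.injective <| congrArg Subtype.val h

theorem sphereToCircle_surjective : Function.Surjective sphereToCircle := fun z =>
  ⟨⟨Complex.orthonormalBasisOneI.repr z, by simp [Circle.norm_coe]⟩,
    Circle.ext <| by simp [coe_sphereToCircle]⟩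

theorem sphereToCircle_eq_neg {v w : S¹} (h : (v : EuclideanSpace ℝ (Fin 2)) = -w) :
    sphereToCircle v = -sphereToCircle w :=
  Circle.ext <| by rw [Circle.coe_neg, coe_sphereToCircle, coe_sphereToCircle, h, map_neg]

def toCircle : ℝP¹ → Circle :=
  Quotient.lift (fun v => sphereToCircle v ^ 2) <| by
    rintro v w (h | h)
    · rw [Subtype.ext h]
    · simp only [sphereToCircle_eq_neg h, neg_sq]

theorem toCircle_mk (v : S¹) : toCircle (Quotient.mk _ v) = sphereToCircle v ^ 2 := rfl

theorem continuous_toCircle : Continuous toCircle :=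
  continuous_quot_lift _ (continuous_sphereToCircle.pow 2)

theorem toCircle_injective : Function.Injective toCircle := by
  rintro ⟨v⟩ ⟨w⟩ h
  have : (sphereToCircle v : ℂ) ^ 2 = (sphereToCircle w : ℂ) ^ 2 := congrArg Subtype.val h
  refine Quotient.sound ?_
  rcases sq_eq_sq_iff_eq_or_eq_neg.1 this with h' | h'
  · exact Or.inl (congrArg Subtype.val (sphereToCircle_injective (Circle.ext h')))
  · refine Or.inr <| Complex.orthonormalBasisOneI.repr.symm.injective ?_
    rwa [map_neg, ← coe_sphereToCircle, ← coe_sphereToCircle]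

theorem toCircle_surjective : Function.Surjective toCircle := by
  intro z
  obtain ⟨θ, rfl⟩ := Circle.exp_surjective z
  obtain ⟨v, hv⟩ := sphereToCircle_surjective (Circle.exp (θ / 2))
  refine ⟨Quotient.mk _ v, ?_⟩
  rw [toCircle_mk, hv, ← Circle.exp_nsmul, nsmul_eq_mul, Nat.cast_ofNat,
    mul_div_cancel₀ _ two_ne_zero]

def homeomorphCircle : ℝP¹ ≃ₜ Circle :=
  continuous_toCircle.homeoOfEquivCompactToT2
    (f := .ofBijective _ ⟨toCircle_injective, toCircle_surjective⟩)

instance : T2Space ℝP¹ := homeomorphCircle.isEmbedding.t2Space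

instance : Nontrivial ℝP¹ :=
  ⟨⟨_, _, homeomorphCircle.symm.injective.ne (Circle.neg_ne_self 1)⟩⟩

theorem bringsTo_of_subset_compl_singleton {X Y : Set ℝP¹} {p y : ℝP¹} (hX : X ⊆ {p}ᶜ)
    (hy : y ∈ Y) (hyp : y ≠ p) : BringsTo X Y := by
  let e := homeomorphCircle
  obtain ⟨L, hL⟩ := Circle.exists_lift_compl_singleton (e p)
  have he : ∀ {x}, x ≠ p → e x ∈ ({e p}ᶜ : Set Circle) := fun hx => e.injective.ne hx
  refine bringsTo_of_lift ((e.symm : C(Circle, ℝP¹)).comp Circle.exp)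
    (L.comp ⟨fun x => ⟨e x, he (hX x.2)⟩, by fun_prop⟩) (fun x => ?_) (e := L ⟨e y, he hyp⟩) ?_
  · simp [hL]
  · simpa [hL] using hy

theorem not_bringsTo_compl_singleton {X : Set ℝP¹} (hX : X = univ) (p : ℝP¹) :
    ¬ BringsTo X {p}ᶜ := by
  subst hX
  rintro ⟨H, h₀, h₁⟩
  let e := homeomorphCircle
  let γ : C(I, (univ : Set ℝP¹)) :=
    ⟨fun s => ⟨e.symm (Circle.exp (2 * π * s)), trivial⟩, by fun_prop⟩
  let F : C(I × I, Circle) := (e : C(ℝP¹, Circle)).comp (H.comp ((γ.comp .snd).prodMk .fst))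
  have hloop : ∀ t, F (t, 0) = F (t, 1) := fun t => by simp [F, γ]
  obtain ⟨s, hs⟩ := Circle.surjective_of_homotopy_from_exp F
    (fun s => by simp [F, γ, h₀, e.apply_symm_apply]) hloop (e p)
  exact h₁ (γ s) (e.injective hs)

theorem not_contractibleIn_univ : ¬ ContractibleIn (univ : Set ℝP¹) := by
  rw [contractibleIn_iff_exists_bringsTo]
  rintro ⟨x₀, h⟩
  obtain ⟨p, hp⟩ := exists_ne x₀
  exact not_bringsTo_compl_singleton rfl p (h.mono (singleton_subset_iff.2 hp.symm))

theorem eq_univ_of_two_le_catLS {A : Set ℝP¹} (hA : IsClosed A) (h : 2 ≤ catLS A) :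
    A = univ := by
  by_contra hne
  obtain ⟨p, hp⟩ := (ne_univ_iff_exists_notMem A).1 hne
  obtain ⟨q, hq⟩ := exists_ne p
  have hA₁ : catLS A ≤ 1 := catLS_le_one hA <| contractibleIn_iff_exists_bringsTo.2
    ⟨q, bringsTo_of_subset_compl_singleton (fun x hx (hxp : x = p) => hp (hxp ▸ hx)) rfl hq⟩
  exact absurd (h.trans hA₁) (by norm_num)

theorem hs_two_eq_iSup (f : ℝP¹ → ℝ) : hs f 2 = ⨆ x, (f x : EReal) := by
  have : {A : Set ℝP¹ | IsClosed A ∧ ((2 : ℕ) : ℕ∞) ≤ catLS A} = {univ} := by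
    ext A
    refine ⟨fun hA => eq_univ_of_two_le_catLS hA.1 hA.2, ?_⟩
    rintro rfl
    exact ⟨isClosed_univ, two_le_catLS_univ_of_not_contractibleIn not_contractibleIn_univ⟩
  rw [hs, this, iInf_singleton, iSup_univ]

theorem homotopySignificant_iff {f : ℝP¹ → ℝ} (hf : Continuous f) {a : ℝ} :
    HomotopySignificant f a ↔
      (a : EReal) = ⨅ x, (f x : EReal) ∨ (a : EReal) = ⨆ x, (f x : EReal) := by
  obtain ⟨xm, -, hxm⟩ := isCompact_univ.exists_isMinOn univ_nonempty hf.continuousOn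
  obtain ⟨xM, -, hxM⟩ := isCompact_univ.exists_isMaxOn univ_nonempty hf.continuousOn
  replace hxm : ∀ y, f xm ≤ f y := fun y => hxm (mem_univ y)
  replace hxM : ∀ y, f y ≤ f xM := fun y => hxM (mem_univ y)
  have hinf : ⨅ x, (f x : EReal) = f xm :=
    le_antisymm (iInf_le _ xm) (le_iInf fun y => EReal.coe_le_coe_iff.2 (hxm y))
  have hsup : ⨆ x, (f x : EReal) = f xM :=
    le_antisymm (iSup_le fun y => EReal.coe_le_coe_iff.2 (hxM y))
      (le_iSup (fun x => (f x : EReal)) xM)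
  rw [hinf, hsup, EReal.coe_eq_coe_iff, EReal.coe_eq_coe_iff]
  constructor
  · intro hsig
    by_contra! hne
    apply hsig
    rcases lt_or_ge a (f xm) with hm | hm
    · exact bringsTo_of_subset fun x (hx : f x ≤ a) => absurd (hx.trans_lt hm) (hxm x).not_gt
    rcases lt_or_ge (f xM) a with hM | hM
    · exact bringsTo_of_subset fun x _ => show f x < a from (hxM x).trans_lt hM
    replace hm : f xm < a := hm.lt_of_ne hne.1.symm
    replace hM : a < f xM := hM.lt_of_ne hne.2
    exact bringsTo_of_subset_compl_singleton (p := xM)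
      (fun x (hx : f x ≤ a) (hxp : x = xM) => (hxp ▸ hx).not_gt hM) (show f xm < a from hm)
      (fun h => (hm.trans hM).ne (congrArg f h))
  · rintro (rfl | rfl)
    · rintro ⟨H, -, h₁⟩
      exact (hxm _).not_gt (h₁ ⟨xm, show f xm ≤ f xm from le_rfl⟩)
    · exact fun h => not_bringsTo_compl_singleton (eq_univ_of_forall hxM) xM
        (h.mono fun x (hx : f x < f xM) (hxM' : x = xM) => (hxM' ▸ hx).false)

end Proj

/-- For a continuous function on `ℝP¹`, the homotopy significant spectrum is exactly
`{hs₁, hs₂} = {min f, max f}`. -/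
theorem homotopySignificant_spectrum_rp1
    (f : Proj (EuclideanSpace ℝ (Fin 2)) → ℝ) (hf : Continuous f) :
    {a : ℝ | HomotopySignificant f a} =
      {a : ℝ | (a : EReal) = hs f 1 ∨ (a : EReal) = hs f 2} ∧
    hs f 1 = ⨅ x, (f x : EReal) ∧ hs f 2 = ⨆ x, (f x : EReal) := by
  refine ⟨?_, hs_one_eq_iInf f, Proj.hs_two_eq_iSup f⟩
  ext a
  rw [mem_ofPred_eq, mem_ofPred_eq, hs_one_eq_iInf, Proj.hs_two_eq_iSup]
  exact Proj.homotopySignificant_iff hf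

end
end

section
/- Let Φ be a topological space, f : Φ → ℝ continuous, and t₂ < t₁. If the closed interval [t₂, t₁] contains no weak homotopy significant eigenvalue of f, then there exists a homotopy H : Φ_{≤t₁} × [0,1] → Φ with H(·,0) the inclusion and H(Φ_{≤t₁}, 1) ⊂ Φ_{≤t₂}. -/
open Set Metric Topology unitInterval

noncomputable section
open Classical

variable {B : Type*} [NormedAddCommGroup B] [NormedSpace ℝ B]

theorem bringsTo_aux_rfl {Φ : Type*} [TopologicalSpace Φ] (X : Set Φ) : BringsTo X X :=
  ⟨⟨fun p => (p.1 : Φ), by continuity⟩, fun x => rfl, fun x => x.2⟩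

theorem bringsTo_aux_mono {Φ : Type*} [TopologicalSpace Φ] {X Y Z : Set Φ}
    (h : BringsTo X Y) (hYZ : Y ⊆ Z) : BringsTo X Z := by
  obtain ⟨H, h0, h1⟩ := h
  exact ⟨H, h0, fun x => hYZ (h1 x)⟩

theorem bringsTo_aux_trans {Φ : Type*} [TopologicalSpace Φ] {X Y Z : Set Φ}
    (h₁ : BringsTo X Y) (h₂ : BringsTo Y Z) : BringsTo X Z := by
  obtain ⟨H₁, h₁0, h₁1⟩ := h₁
  obtain ⟨H₂, h₂0, h₂1⟩ := h₂
  have hg : Continuous fun x : ↥X => H₁ (x, 1) :=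
    H₁.continuous.comp (continuous_id.prodMk continuous_const)
  let g : C(↥X, ↥Y) := ⟨fun x => ⟨H₁ (x, 1), h₁1 x⟩, hg.subtype_mk _⟩
  let f₀ : C(↥X, Φ) := ⟨fun x => (x : Φ), continuous_subtype_val⟩
  let f₁ : C(↥X, Φ) := ⟨fun x => H₁ (x, 1), hg⟩
  let f₂ : C(↥X, Φ) := ⟨fun x => H₂ (g x, 1), H₂.continuous.comp (g.continuous.prodMk continuous_const)⟩
  let F₁ : ContinuousMap.Homotopy f₀ f₁ :=
    { toFun := fun p => H₁ (p.2, p.1)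
      continuous_toFun := H₁.continuous.comp (continuous_snd.prodMk continuous_fst)
      map_zero_left := fun x => h₁0 x
      map_one_left := fun x => rfl }
  let F₂ : ContinuousMap.Homotopy f₁ f₂ :=
    { toFun := fun p => H₂ (g p.2, p.1)
      continuous_toFun := H₂.continuous.comp ((g.continuous.comp continuous_snd).prodMk continuous_fst)
      map_zero_left := fun x => h₂0 (g x)
      map_one_left := fun x => rfl }
  let F := F₁.trans F₂
  refine ⟨⟨fun p => F (p.2, p.1), F.continuous.comp (continuous_snd.prodMk continuous_fst)⟩, fun x => ?_, fun x => ?_⟩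
  · exact F.map_zero_left x
  · show F (1, x) ∈ Z
    have : F (1, x) = f₂ x := F.map_one_left x
    rw [this]
    exact h₂1 (g x)

/-- If `[t₂, t₁]` contains no weak homotopy significant eigenvalue of `f`, then the
sublevel set `{f ≤ t₁}` can be brought to `{f ≤ t₂}` by a homotopy in `Φ`. -/
theorem bringsTo_of_no_weakHomotopySignificant {Φ : Type*} [TopologicalSpace Φ]
    (f : Φ → ℝ) (hf : Continuous f) (t₁ t₂ : ℝ) (h : t₂ < t₁)
    (hno : ∀ e ∈ Set.Icc t₂ t₁, ¬ WeakHomotopySignificant f e) :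
    BringsTo {x | f x ≤ t₁} {x | f x ≤ t₂} := by
  by_contra hc
  set S : Set ℝ := {t | t₂ ≤ t ∧ BringsTo {x | f x ≤ t₁} {x | f x ≤ t}} with hS
  have ht₁S : t₁ ∈ S := ⟨h.le, bringsTo_aux_rfl _⟩
  have hne : S.Nonempty := ⟨t₁, ht₁S⟩
  have hbdd : BddBelow S := ⟨t₂, fun t ht => ht.1⟩
  set c := sInf S with hc'
  have hct₂ : t₂ ≤ c := le_csInf hne fun t ht => ht.1
  have hct₁ : c ≤ t₁ := csInf_le hbdd ht₁S
  have hW := hno c ⟨hct₂, hct₁⟩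
  rw [WeakHomotopySignificant] at hW
  push_neg at hW
  obtain ⟨s₁, hs₁, s₂, hs₂, hB⟩ := hW
  obtain ⟨t, htS, hts₁⟩ := exists_lt_of_csInf_lt hne hs₁
  have B1 : BringsTo {x | f x ≤ t₁} {x | f x ≤ s₁} :=
    bringsTo_aux_mono htS.2 fun x hx => le_trans hx hts₁.le
  have B2 : BringsTo {x | f x ≤ t₁} {x | f x ≤ s₂} := bringsTo_aux_trans B1 hB
  rcases le_or_gt s₂ t₂ with hle | hlt
  · exact hc (bringsTo_aux_mono B2 fun x hx => le_trans hx hle)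
  · exact absurd (csInf_le hbdd ⟨hlt.le, B2⟩) (not_le.2 hs₂)

end
end

section
/- Let Φ be a topological space and f : Φ → ℝ continuous with a weak homotopy significant eigenvalue e ∈ ℝ. If g : Φ → ℝ is continuous with sup_{x∈Φ} |f(x) − g(x)| < δ for some δ > 0, then g has a weak homotopy significant eigenvalue ẽ with |e − ẽ| < δ. -/
open Set Metric Topology unitInterval

noncomputable section
open Classical

variable {B : Type*} [NormedAddCommGroup B] [NormedSpace ℝ B]

private lemma bringsTo_mono {Φ : Type*} [TopologicalSpace Φ] {X X' Y Y' : Set Φ}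
    (hX : X' ⊆ X) (hY : Y ⊆ Y') (h : BringsTo X Y) : BringsTo X' Y' := by
  obtain ⟨H, h0, h1⟩ := h
  refine ⟨H.comp ⟨fun p => (⟨p.1.1, hX p.1.2⟩, p.2),
    ((continuous_subtype_val.comp continuous_fst).subtype_mk _).prodMk continuous_snd⟩,
    fun x => h0 _, fun x => hY (h1 _)⟩

private lemma bringsTo_trans {Φ : Type*} [TopologicalSpace Φ] {X Y Z : Set Φ}
    (hXY : BringsTo X Y) (hYZ : BringsTo Y Z) : BringsTo X Z := by
  obtain ⟨H₁, h₁0, h₁1⟩ := hXY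
  obtain ⟨H₂, h₂0, h₂1⟩ := hYZ
  let r : C(↥X, ↥Y) := ⟨fun x => ⟨H₁ (x, 1), h₁1 x⟩,
    (H₁.continuous.comp (continuous_id.prodMk continuous_const)).subtype_mk _⟩
  let F₀ : C(↥X, Φ) := ⟨fun x => (x : Φ), continuous_subtype_val⟩
  let F₁ : C(↥X, Φ) := ⟨fun x => H₁ (x, 1),
    H₁.continuous.comp (continuous_id.prodMk continuous_const)⟩
  let F₂ : C(↥X, Φ) := ⟨fun x => H₂ (r x, 1),
    H₂.continuous.comp (r.continuous.prodMk continuous_const)⟩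
  let Hom₁ : F₀.Homotopy F₁ :=
    { toFun := fun p => H₁ (p.2, p.1)
      continuous_toFun := H₁.continuous.comp (continuous_snd.prodMk continuous_fst)
      map_zero_left := fun x => h₁0 x
      map_one_left := fun x => rfl }
  let Hom₂ : F₁.Homotopy F₂ :=
    { toFun := fun p => H₂ (r p.2, p.1)
      continuous_toFun := H₂.continuous.comp
        ((r.continuous.comp continuous_snd).prodMk continuous_fst)
      map_zero_left := fun x => h₂0 (r x)
      map_one_left := fun x => rfl }
  let Hom := Hom₁.trans Hom₂
  refine ⟨⟨fun p => Hom (p.2, p.1), Hom.continuous.comp (continuous_snd.prodMk continuous_fst)⟩,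
    fun x => ?_, fun x => ?_⟩
  · exact Hom.apply_zero x
  · have h1 := Hom.apply_one x
    simp only [ContinuousMap.coe_mk]
    rw [h1]
    exact h₂1 (r x)

/-- Stability of the weak homotopy significant spectrum: if `g` is uniformly `δ`-close
to `f` and `e` is a weak homotopy significant eigenvalue of `f`, then `g` has a weak
homotopy significant eigenvalue within distance `δ` of `e`. -/
theorem weakHomotopySignificant_stable {Φ : Type*} [TopologicalSpace Φ]
    (f g : Φ → ℝ) (hf : Continuous f) (hg : Continuous g)
    (e : ℝ) (he : WeakHomotopySignificant f e)
    (δ : ℝ) (hδ : 0 < δ) (hfg : (⨆ x : Φ, ((|f x - g x| : ℝ) : EReal)) < (δ : EReal)) :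
    ∃ e' : ℝ, WeakHomotopySignificant g e' ∧ |e - e'| < δ := by
  by_contra hcon
  push_neg at hcon
  obtain ⟨c, hc1, hc2⟩ := exists_between hfg
  have hcbot : c ≠ ⊥ := fun h => not_lt_bot (h ▸ hc1)
  have hctop : c ≠ ⊤ := ne_top_of_lt hc2
  have hceq : ((c.toReal : ℝ) : EReal) = c := EReal.coe_toReal hctop hcbot
  set δ' : ℝ := max c.toReal 0 with hδ'def
  have hδ'δ : δ' < δ := max_lt (EReal.coe_lt_coe_iff.mp (hceq ▸ hc2)) hδ
  have hδ'0 : 0 ≤ δ' := le_max_right _ _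
  have hbound : ∀ x, |f x - g x| ≤ δ' := by
    intro x
    have h1 : ((|f x - g x| : ℝ) : EReal) < ((c.toReal : ℝ) : EReal) := by
      rw [hceq]
      exact lt_of_le_of_lt (le_iSup (fun x => ((|f x - g x| : ℝ) : EReal)) x) hc1
    exact le_trans (EReal.coe_lt_coe_iff.mp h1).le (le_max_left _ _)
  have hyp : ∀ e' ∈ Set.Icc (e - δ') (e + δ'),
      ∃ t₁ > e', ∃ t₂ < e', BringsTo {x | g x ≤ t₁} {x | g x ≤ t₂} := by
    intro e' he'
    obtain ⟨he'1, he'2⟩ := he'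
    have habs : |e - e'| < δ := abs_lt.mpr ⟨by linarith, by linarith⟩
    have hne : ¬ WeakHomotopySignificant g e' :=
      fun h => absurd (hcon e' h) (not_le.mpr habs)
    unfold WeakHomotopySignificant at hne
    push_neg at hne
    exact hne
  set S : Set ℝ := {x | x ≤ e + δ' ∧
    ∃ u > x, ∃ t < e - δ', BringsTo {p | g p ≤ u} {p | g p ≤ t}} with hSdef
  have hSa : (e - δ') ∈ S := by
    obtain ⟨t₁, ht₁, t₂, ht₂, hB⟩ := hyp (e - δ') ⟨le_refl _, by linarith⟩
    exact ⟨by linarith, t₁, ht₁, t₂, ht₂, hB⟩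
  have hSbdd : BddAbove S := ⟨e + δ', fun x hx => hx.1⟩
  have hac : e - δ' ≤ sSup S := le_csSup hSbdd hSa
  have hcb : sSup S ≤ e + δ' := csSup_le ⟨_, hSa⟩ (fun x hx => hx.1)
  obtain ⟨t₁, ht₁, t₂, ht₂, hB⟩ := hyp (sSup S) ⟨hac, hcb⟩
  have key : ∃ t' < e - δ', BringsTo {p | g p ≤ t₁} {p | g p ≤ t'} := by
    by_cases h : t₂ < e - δ'
    · exact ⟨t₂, h, hB⟩
    · obtain ⟨x, hxS, hx⟩ := exists_lt_of_lt_csSup ⟨_, hSa⟩ ht₂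
      obtain ⟨hxb, u, hu, t', ht', hB'⟩ := hxS
      refine ⟨t', ht', bringsTo_trans (bringsTo_mono (subset_refl _) ?_ hB) hB'⟩
      intro p hp
      exact le_trans hp (le_of_lt (hx.trans hu))
  obtain ⟨t', ht', hBt⟩ := key
  have ht₁b : e + δ' < t₁ := by
    by_contra hle
    push_neg at hle
    have hxS : (sSup S + t₁) / 2 ∈ S :=
      ⟨by linarith, t₁, by linarith, t', ht', hBt⟩
    have := le_csSup hSbdd hxS
    linarith
  have hfinal : BringsTo {x | f x ≤ t₁ - δ'} {x | f x ≤ t' + δ'} := by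
    refine bringsTo_mono (fun p hp => ?_) (fun p hp => ?_) hBt
    · have h1 := abs_le.mp (hbound p)
      simp only [Set.mem_setOf_eq] at hp ⊢
      linarith [h1.1, h1.2]
    · have h1 := abs_le.mp (hbound p)
      simp only [Set.mem_setOf_eq] at hp ⊢
      linarith [h1.1, h1.2]
  exact he (t₁ - δ') (by linarith) (t' + δ') (by linarith) hfinal


end
end

section
/- Let (M, g) be a closed Riemannian manifold with normalized volume measure μ, and let S be the unit sphere of BV(M). For every continuous curve ρ : [0,1] → S with ρ(1) = −ρ(0), there exists σ ∈ [0,1] such that 0 is a median of ρ(σ), i.e. μ({ρ(σ) ≤ 0}) ≥ 1/2 and μ({ρ(σ) ≥ 0}) ≥ 1/2. -/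
open Set Metric Topology unitInterval
open scoped ENNReal

noncomputable section
open Classical

variable {B : Type*} [NormedAddCommGroup B] [NormedSpace ℝ B]

open MeasureTheory Filter in
/-- Key semicontinuity lemma: if `uₖ → v` in `L¹` and each `{uₖ ≤ 0}` has measure at
least `1/2`, so does `{v ≤ 0}`. -/
lemma measure_le_zero_limit {M : Type*} [MeasurableSpace M] {μ : Measure M}
    [IsProbabilityMeasure μ] (u : ℕ → Lp ℝ 1 μ) (v : Lp ℝ 1 μ)
    (hconv : Tendsto u atTop (𝓝 v))
    (h : ∀ k, (1 / 2 : ℝ≥0∞) ≤ μ {x | (u k : M → ℝ) x ≤ 0}) :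
    (1 / 2 : ℝ≥0∞) ≤ μ {x | (v : M → ℝ) x ≤ 0} := by
  have hm : TendstoInMeasure μ (fun k => (u k : M → ℝ)) atTop v :=
    tendstoInMeasure_of_tendsto_Lp hconv
  obtain ⟨ns, -, hae⟩ := hm.exists_seq_tendsto_ae
  set S : ℕ → Set M := fun j => {x | (u j : M → ℝ) x ≤ 0} with hS
  have hSm : ∀ j, MeasurableSet (S j) := fun j =>
    measurableSet_le (Lp.stronglyMeasurable (u j)).measurable measurable_const
  set E : ℕ → Set M := fun n => ⋃ k, ⋃ _ : n ≤ k, S (ns k) with hE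
  have hEm : ∀ n, MeasurableSet (E n) := fun n =>
    MeasurableSet.iUnion fun k => MeasurableSet.iUnion fun _ => hSm _
  have hEanti : ∀ ⦃m n : ℕ⦄, m ≤ n → E n ⊆ E m := by
    intro m n hmn x hx
    simp only [hE, Set.mem_iUnion] at hx ⊢
    obtain ⟨k, hk, hxk⟩ := hx
    exact ⟨k, hmn.trans hk, hxk⟩
  have hEhalf : ∀ n, (1 / 2 : ℝ≥0∞) ≤ μ (E n) := by
    intro n
    refine le_trans (h (ns n)) (measure_mono ?_)
    intro x hx
    simp only [hE, Set.mem_iUnion]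
    exact ⟨n, le_rfl, hx⟩
  have hdir : Directed (· ⊇ ·) E := by
    intro m n
    exact ⟨max m n, hEanti (le_max_left m n), hEanti (le_max_right m n)⟩
  have hInter : (1 / 2 : ℝ≥0∞) ≤ μ (⋂ n, E n) := by
    rw [Directed.measure_iInter (fun n => (hEm n).nullMeasurableSet) hdir
      ⟨0, measure_ne_top μ _⟩]
    exact le_iInf hEhalf
  refine le_trans hInter (measure_mono_ae ?_)
  filter_upwards [hae] with x hx hxE
  show (v : M → ℝ) x ≤ 0
  by_contra hpos
  push_neg at hpos
  have hev : ∀ᶠ k in atTop, (0 : ℝ) < (u (ns k) : M → ℝ) x :=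
    hx.eventually (eventually_gt_nhds hpos)
  obtain ⟨N, hN⟩ := eventually_atTop.mp hev
  have hxEN := Set.mem_iInter.mp hxE N
  simp only [hE, Set.mem_iUnion] at hxEN
  obtain ⟨k, hk, hxk⟩ := hxEN
  exact absurd (hN k hk) (not_lt.mpr hxk)

open MeasureTheory in
/-- Along any continuous curve in the unit sphere of `BV(M)` joining two antipodal
points, some point of the curve has `0` as a median. Here `BV(M)` (for a closed
Riemannian manifold `M` with normalized volume `μ`) is abstracted as a normed space
continuously embedded in `L¹(μ)` via `ι`, with `‖u‖_BV = TV(u) + ‖u‖₁`. -/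
theorem exists_median_zero_on_antipodal_curve
    {M : Type*} [MeasurableSpace M] (μ : Measure M) [IsProbabilityMeasure μ]
    (BVM : Type*) [NormedAddCommGroup BVM] [NormedSpace ℝ BVM]
    (ι : BVM →ₗ[ℝ] Lp ℝ 1 μ) (hι : Function.Injective ι)
    (TV : BVM → ℝ) (hTVnn : ∀ u, 0 ≤ TV u)
    (hnorm : ∀ u : BVM, ‖u‖ = TV u + ‖ι u‖)
    (ρ : ↥I → BVM) (hρ : Continuous ρ)
    (hsph : ∀ s, ‖ρ s‖ = 1) (hanti : ρ 1 = -ρ 0) :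
    ∃ s0 : ↥I, (1 / 2 : ℝ≥0∞) ≤ μ {x : M | (ι (ρ s0) : M → ℝ) x ≤ 0} ∧
      (1 / 2 : ℝ≥0∞) ≤ μ {x : M | 0 ≤ (ι (ρ s0) : M → ℝ) x} := by
  classical
  -- `ι` is a bounded linear map, hence continuous
  have hιb : ∀ u : BVM, ‖ι u‖ ≤ 1 * ‖u‖ := by
    intro u
    rw [one_mul, hnorm u]
    linarith [hTVnn u]
  let ιc : BVM →L[ℝ] Lp ℝ 1 μ := ι.mkContinuous 1 hιb
  have hιc : ∀ u, ιc u = ι u := fun _ => rfl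
  let f : ↥I → Lp ℝ 1 μ := fun s => ι (ρ s)
  have hf : Continuous f := by
    have : f = fun s => ιc (ρ s) := rfl
    rw [this]
    exact ιc.continuous.comp hρ
  -- the two closed sets
  set A : Set ↥I := {s | (1 / 2 : ℝ≥0∞) ≤ μ {x : M | (f s : M → ℝ) x ≤ 0}} with hA
  set Bs : Set ↥I := {s | (1 / 2 : ℝ≥0∞) ≤ μ {x : M | 0 ≤ (f s : M → ℝ) x}} with hB
  have hAB : ∀ s, s ∈ A ∪ Bs := by
    intro s
    by_contra hc
    simp only [Set.mem_union, hA, hB, Set.mem_setOf_eq, not_or, not_le] at hc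
    have hcover : {x : M | (f s : M → ℝ) x ≤ 0} ∪ {x : M | 0 ≤ (f s : M → ℝ) x} =
        Set.univ := by
      ext x; simp [le_total]
    have h1 : (1 : ℝ≥0∞) = μ Set.univ := (measure_univ).symm
    have := measure_union_le (μ := μ) {x : M | (f s : M → ℝ) x ≤ 0}
      {x : M | 0 ≤ (f s : M → ℝ) x}
    rw [hcover, measure_univ] at this
    have hlt : μ {x : M | (f s : M → ℝ) x ≤ 0} + μ {x : M | 0 ≤ (f s : M → ℝ) x}
        < 1 / 2 + 1 / 2 := ENNReal.add_lt_add hc.1 hc.2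
    rw [ENNReal.add_halves] at hlt
    exact absurd (this.trans_lt hlt) (lt_irrefl _)
  -- closedness of A
  have hAc : IsClosed A := by
    have : IsSeqClosed A := by
      intro x p hx hxp
      exact measure_le_zero_limit (fun k => f (x k)) (f p)
        ((hf.tendsto p).comp hxp) hx
    exact this.isClosed
  -- closedness of Bs, via negation
  have hBc : IsClosed Bs := by
    have key : ∀ s : ↥I, μ {x : M | 0 ≤ (f s : M → ℝ) x} =
        μ {x : M | ((-f s : Lp ℝ 1 μ) : M → ℝ) x ≤ 0} := by
      intro s
      refine measure_congr ?_
      filter_upwards [Lp.coeFn_neg (f s)] with x hx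
      have hiff : (0 ≤ (f s : M → ℝ) x) ↔ (((-f s : Lp ℝ 1 μ) : M → ℝ) x ≤ 0) := by
        rw [hx]; simp
      exact propext hiff
    have : IsSeqClosed Bs := by
      intro x p hx hxp
      have h2 : (1 / 2 : ℝ≥0∞) ≤ μ {x : M | ((-f p : Lp ℝ 1 μ) : M → ℝ) x ≤ 0} := by
        refine measure_le_zero_limit (fun k => -f (x k)) (-f p) ?_ ?_
        · exact (continuous_neg.tendsto (f p)).comp ((hf.tendsto p).comp hxp)
        · intro k
          rw [← key (x k)]
          exact hx k
      rw [hB, Set.mem_setOf_eq, key p]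
      exact h2
    exact this.isClosed
  -- antipodal relation between the endpoints
  have hf10 : f 1 = -f 0 := by
    show ι (ρ 1) = -ι (ρ 0)
    rw [hanti, map_neg]
  have hkey01 : μ {x : M | 0 ≤ (f 1 : M → ℝ) x} = μ {x : M | (f 0 : M → ℝ) x ≤ 0} := by
    refine measure_congr ?_
    have h1 : (f 1 : M → ℝ) =ᵐ[μ] -(f 0 : M → ℝ) := by
      rw [hf10]; exact Lp.coeFn_neg (f 0)
    filter_upwards [h1] with x hx
    have hiff : (0 ≤ (f 1 : M → ℝ) x) ↔ ((f 0 : M → ℝ) x ≤ 0) := by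
      rw [hx]; simp
    exact propext hiff
  have hkey10 : μ {x : M | (f 1 : M → ℝ) x ≤ 0} = μ {x : M | 0 ≤ (f 0 : M → ℝ) x} := by
    refine measure_congr ?_
    have h1 : (f 1 : M → ℝ) =ᵐ[μ] -(f 0 : M → ℝ) := by
      rw [hf10]; exact Lp.coeFn_neg (f 0)
    filter_upwards [h1] with x hx
    have hiff : ((f 1 : M → ℝ) x ≤ 0) ↔ (0 ≤ (f 0 : M → ℝ) x) := by
      rw [hx]; simp
    exact propext hiff
  -- connectedness argument
  by_contra hno
  have hdisj : A ∩ Bs = ∅ := by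
    ext s
    simp only [Set.mem_inter_iff, Set.mem_empty_iff_false, iff_false, not_and]
    intro h1 h2
    exact hno ⟨s, h1, h2⟩
  have hcompl : Bs = Aᶜ := by
    ext s
    constructor
    · intro hs
      intro hsA
      have : s ∈ A ∩ Bs := ⟨hsA, hs⟩
      rw [hdisj] at this
      exact this
    · intro hs
      rcases hAB s with h | h
      · exact absurd h hs
      · exact h
  have hclopen : IsClopen A := ⟨hAc, by rw [← isClosed_compl_iff, ← hcompl]; exact hBc⟩
  rcases isClopen_iff.mp hclopen with hAe | hAu
  · -- A = ∅, so Bs = univ; then 1 ∈ Bs gives 0 ∈ A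
    have h1B : (1 : ↥I) ∈ Bs := by
      rcases hAB 1 with h | h
      · rw [hAe] at h; exact absurd h (Set.notMem_empty _)
      · exact h
    have h0A : (0 : ↥I) ∈ A := by
      rw [hA, Set.mem_setOf_eq, ← hkey01]
      exact h1B
    rw [hAe] at h0A
    exact h0A
  · -- A = univ; then 1 ∈ A gives 0 ∈ Bs, contradicting disjointness
    have h1A : (1 : ↥I) ∈ A := hAu ▸ Set.mem_univ _
    have h0B : (0 : ↥I) ∈ Bs := by
      rw [hB, Set.mem_setOf_eq, ← hkey10]
      exact h1A
    have h0A : (0 : ↥I) ∈ A := hAu ▸ Set.mem_univ _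
    have : (0 : ↥I) ∈ A ∩ Bs := ⟨h0A, h0B⟩
    rw [hdisj] at this
    exact this

end
end
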